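/- arXiv:1102.5547 — 4 statements merged into one kernel-verified Lean document; each statement's English description precedes it below -/
import Mathlib

section
/- Let x ∈ ℤ₂, k ∈ ℕ, and a ∈ ℕ with a < 2^k, and set m = α(a). Then Φ(a + 2^k·x) = Φ(a) + (Φ(x)/3^m)·2^k, where division by 3^m means multiplication by the inverse of 3^m in ℤ₂. -/
noncomputable section

/-- The inverse of `3` in the ring of 2-adic integers. -/
def inv3 : ℤ_[2] := Ring.inverse 3

/-- The `j`-th binary digit of a 2-adic integer (as `0` or `1`). -/
def dig (x : ℤ_[2]) (j : ℕ) : ℕ := if Nat.testBit (x.appr (j + 1)) j then 1 else 0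

/-- The number of one digits of `x` in positions `< j`. -/
def digCount (x : ℤ_[2]) (j : ℕ) : ℕ := ∑ i ∈ Finset.range j, dig x i

/-- Bernstein's formula for the 3x+1 conjugacy map `Φ`:
if `x = ∑_i 2^{d_i}` with `d_0 < d_1 < ⋯`, then `Φ x = -∑_i 2^{d_i} 3^{-i}`. -/
def Phi (x : ℤ_[2]) : ℤ_[2] :=
  -∑' j : ℕ, (dig x j : ℤ_[2]) * 2 ^ j * inv3 ^ digCount x j

/-- `L_k(x)`: the unique natural number `< 2^k` congruent to `x` mod `2^k`. -/
def Lk (k : ℕ) (x : ℤ_[2]) : ℕ := x.appr k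

theorem two_pow_dvd_sub_appr (k : ℕ) (x : ℤ_[2]) :
    (2 : ℤ_[2]) ^ k ∣ x - (x.appr k : ℤ_[2]) := by
  have h := PadicInt.appr_spec k x
  rw [Ideal.mem_span_singleton] at h
  exact_mod_cast h

theorem exists_Rk (k : ℕ) (x : ℤ_[2]) :
    ∃ z : ℤ_[2], x = (x.appr k : ℤ_[2]) + 2 ^ k * z := by
  obtain ⟨c, hc⟩ := two_pow_dvd_sub_appr k x
  exact ⟨c, by rw [← hc]; ring⟩

/-- `R_k(x)`: the unique 2-adic integer with `x = L_k(x) + 2^k · R_k(x)`. -/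
def Rk (k : ℕ) (x : ℤ_[2]) : ℤ_[2] := (exists_Rk k x).choose

/-- `α(a)`: the number of ones in the binary expansion of `a`. -/
def alphaNat (a : ℕ) : ℕ := (Nat.bits a).count true

/-- `b̄_{v,∞} = b · ∑_{i=0}^∞ 2^{v i}` as a 2-adic integer. -/
def bbar (b v : ℕ) : ℤ_[2] := (b : ℤ_[2]) * ∑' i : ℕ, (2 : ℤ_[2]) ^ (v * i)

/-- `b̄_{v,t} = b · ∑_{i=0}^{t-1} 2^{v i}` as a natural number. -/
def bbarFin (b v t : ℕ) : ℕ := b * ∑ i ∈ Finset.range t, 2 ^ (v * i)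

/-- The farPoint `fP(x,k)`: the least `r` such that no 2-adic congruent to `x`
mod `2^k` is a fixed point of `Φ` mod `2^{k+r}`, and `∞` if no such `r` exists. -/
def fP (x k : ℕ) : ℕ∞ :=
  sInf ((↑) '' {r : ℕ | ∀ z : ℤ_[2],
    (2 : ℤ_[2]) ^ k ∣ z - (x : ℤ_[2]) → ¬ (2 : ℤ_[2]) ^ (k + r) ∣ Phi z - z})

end

/-!
Below position `k` the binary digits of `a + 2^k x` are those of `a`, and its digit `k + i` is
digit `i` of `x`; so up to position `k + i` it has `α(a)` plus as many one digits as `x` has up to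
`i`. Splitting Bernstein's series for `Φ(a + 2^k x)` at `k`, the first `k` terms give `Φ(a)` and
the tail is the series of `Φ(x)` multiplied by `2^k 3^{-α(a)}`.
-/

namespace PadicInt

variable {p : ℕ} [Fact p.Prime]

theorem appr_eq_val_toZModPow (x : ℤ_[p]) (n : ℕ) : x.appr n = (toZModPow n x).val :=
  (ZMod.val_natCast_of_lt (appr_lt x n)).symm

theorem appr_eq_of_dvd_sub {x : ℤ_[p]} {n b : ℕ} (hb : b < p ^ n)
    (h : (p : ℤ_[p]) ^ n ∣ x - b) : x.appr n = b := by
  have hker : x - b ∈ RingHom.ker (toZModPow n : ℤ_[p] →+* ZMod (p ^ n)) := by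
    rwa [ker_toZModPow, Ideal.mem_span_singleton]
  rw [RingHom.mem_ker, map_sub, sub_eq_zero, map_natCast] at hker
  rw [appr_eq_val_toZModPow, hker, ZMod.val_natCast_of_lt hb]

theorem appr_natCast (a n : ℕ) : (a : ℤ_[p]).appr n = a % p ^ n := by
  rw [appr_eq_val_toZModPow, map_natCast, ZMod.val_natCast]

theorem appr_natCast_add_pow_mul {a k : ℕ} (ha : a < p ^ k) (x : ℤ_[p]) (n : ℕ) :
    ((a : ℤ_[p]) + p ^ k * x).appr (k + n) = p ^ k * x.appr n + a := by
  refine appr_eq_of_dvd_sub ?_ ?_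
  · calc p ^ k * x.appr n + a < p ^ k * (x.appr n + 1) := by linarith
      _ ≤ p ^ k * p ^ n := Nat.mul_le_mul_left _ (appr_lt x n)
      _ = p ^ (k + n) := (pow_add p k n).symm
  · obtain ⟨c, hc⟩ := Ideal.mem_span_singleton.mp (appr_spec n x)
    refine ⟨c, ?_⟩
    push_cast
    linear_combination (p : ℤ_[p]) ^ k * hc

theorem appr_mod_pow (x : ℤ_[p]) {m n : ℕ} (h : m ≤ n) : x.appr n % p ^ m = x.appr m := by
  refine (appr_eq_of_dvd_sub (Nat.mod_lt _ (pow_pos (Fact.out : p.Prime).pos m)) ?_).symm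
  obtain ⟨c, hc⟩ := Ideal.mem_span_singleton.mp (appr_spec n x)
  have hdiv := Nat.div_add_mod (x.appr n) (p ^ m)
  refine ⟨p ^ (n - m) * c + (x.appr n / p ^ m : ℕ), ?_⟩
  rw [← Nat.cast_inj (R := ℤ_[p])] at hdiv
  push_cast at hdiv
  rw [← pow_mul_pow_sub (p : ℤ_[p]) h] at hc
  linear_combination hc - hdiv

end PadicInt

theorem alphaNat_eq_mod_two_add_div_two (a : ℕ) : alphaNat a = a % 2 + alphaNat (a / 2) := by
  rcases Nat.even_or_odd' a with ⟨c, rfl | rfl⟩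
  · rcases eq_or_ne c 0 with rfl | hc
    · rfl
    · simp [alphaNat, Nat.bit0_bits c hc]
  · rw [alphaNat, alphaNat, Nat.bit1_bits, show (2 * c + 1) / 2 = c by omega]
    simp [add_comm]

theorem sum_range_testBit_eq_alphaNat {k a : ℕ} (ha : a < 2 ^ k) :
    ∑ j ∈ Finset.range k, (if a.testBit j then 1 else 0) = alphaNat a := by
  induction k generalizing a with
  | zero => simp [Nat.lt_one_iff.mp ha, alphaNat]
  | succ k ih =>
    rw [Finset.sum_range_succ', alphaNat_eq_mod_two_add_div_two,
      ← ih (by rw [pow_succ] at ha; omega)]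
    simp only [Nat.testBit_add_one, Nat.testBit_zero, decide_eq_true_eq]
    split_ifs <;> omega

theorem dig_eq_testBit_appr (x : ℤ_[2]) {j n : ℕ} (hj : j < n) :
    dig x j = if (x.appr n).testBit j then 1 else 0 := by
  rw [dig, ← PadicInt.appr_mod_pow x hj, Nat.testBit_mod_two_pow]
  simp

theorem dig_natCast (a j : ℕ) : dig (a : ℤ_[2]) j = if a.testBit j then 1 else 0 := by
  rw [dig, PadicInt.appr_natCast, Nat.testBit_mod_two_pow]
  simp

theorem digCount_natCast_eq_alphaNat {a k : ℕ} (ha : a < 2 ^ k) :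
    digCount (a : ℤ_[2]) k = alphaNat a := by
  simp only [digCount, dig_natCast, sum_range_testBit_eq_alphaNat ha]

noncomputable def phiTerm (x : ℤ_[2]) (j : ℕ) : ℤ_[2] := dig x j * 2 ^ j * inv3 ^ digCount x j

theorem Phi_eq_neg_tsum_phiTerm (x : ℤ_[2]) : Phi x = -∑' j, phiTerm x j := rfl

theorem summable_phiTerm (x : ℤ_[2]) : Summable (phiTerm x) := by
  refine Summable.of_norm_bounded (summable_geometric_of_lt_one (r := (2 : ℝ)⁻¹)
    (by norm_num) (by norm_num)) fun j => ?_
  have h2 : ‖(2 : ℤ_[2])‖ = 2⁻¹ := by simpa using PadicInt.norm_p (p := 2)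
  calc ‖phiTerm x j‖
      = ‖(dig x j : ℤ_[2])‖ * ‖(2 : ℤ_[2])‖ ^ j * ‖inv3 ^ digCount x j‖ := by
        rw [phiTerm, norm_mul, norm_mul, norm_pow]
    _ ≤ 1 * (2 : ℝ)⁻¹ ^ j * 1 := by
        rw [h2]
        gcongr <;> exact PadicInt.norm_le_one _
    _ = (2 : ℝ)⁻¹ ^ j := by ring

theorem phiTerm_natCast_eq_zero {a j : ℕ} (ha : a < 2 ^ j) : phiTerm (a : ℤ_[2]) j = 0 := by
  simp [phiTerm, dig_natCast, Nat.testBit_eq_false_of_lt ha]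

theorem Phi_natCast {a k : ℕ} (ha : a < 2 ^ k) :
    Phi (a : ℤ_[2]) = -∑ j ∈ Finset.range k, phiTerm (a : ℤ_[2]) j := by
  refine congrArg Neg.neg (tsum_eq_sum fun j hj => phiTerm_natCast_eq_zero ?_)
  exact ha.trans_le (Nat.pow_le_pow_right two_pos (not_lt.mp (Finset.mem_range.not.mp hj)))

section NatCastAddTwoPowMul

variable {a k : ℕ} (x : ℤ_[2])

theorem appr_natCast_add_two_pow_mul (ha : a < 2 ^ k) (n : ℕ) :
    ((a : ℤ_[2]) + 2 ^ k * x).appr (k + n) = 2 ^ k * x.appr n + a := by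
  exact_mod_cast PadicInt.appr_natCast_add_pow_mul ha x n

theorem dig_natCast_add_two_pow_mul_of_lt (ha : a < 2 ^ k) {j : ℕ} (hj : j < k) :
    dig ((a : ℤ_[2]) + 2 ^ k * x) j = dig (a : ℤ_[2]) j := by
  rw [dig_eq_testBit_appr _ (show j < k + 0 from hj), appr_natCast_add_two_pow_mul x ha,
    Nat.testBit_two_pow_mul_add _ ha, if_pos hj, dig_natCast]

theorem dig_natCast_add_two_pow_mul_add (ha : a < 2 ^ k) (i : ℕ) :
    dig ((a : ℤ_[2]) + 2 ^ k * x) (k + i) = dig x i := by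
  rw [dig_eq_testBit_appr _ (show k + i < k + (i + 1) by omega),
    appr_natCast_add_two_pow_mul x ha, Nat.testBit_two_pow_mul_add _ ha,
    if_neg (Nat.not_lt.mpr (Nat.le_add_right k i)), Nat.add_sub_cancel_left, dig]

theorem digCount_natCast_add_two_pow_mul_of_le (ha : a < 2 ^ k) {j : ℕ} (hj : j ≤ k) :
    digCount ((a : ℤ_[2]) + 2 ^ k * x) j = digCount (a : ℤ_[2]) j :=
  Finset.sum_congr rfl fun _ hi =>
    dig_natCast_add_two_pow_mul_of_lt x ha ((Finset.mem_range.mp hi).trans_le hj)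

theorem digCount_natCast_add_two_pow_mul_add (ha : a < 2 ^ k) (i : ℕ) :
    digCount ((a : ℤ_[2]) + 2 ^ k * x) (k + i) = alphaNat a + digCount x i := by
  rw [digCount, Finset.sum_range_add, ← digCount, ← digCount_natCast_eq_alphaNat ha,
    digCount_natCast_add_two_pow_mul_of_le x ha le_rfl, digCount]
  congr 1
  exact Finset.sum_congr rfl fun j _ => dig_natCast_add_two_pow_mul_add x ha j

theorem phiTerm_natCast_add_two_pow_mul_of_lt (ha : a < 2 ^ k) {j : ℕ} (hj : j < k) :
    phiTerm ((a : ℤ_[2]) + 2 ^ k * x) j = phiTerm (a : ℤ_[2]) j := by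
  rw [phiTerm, phiTerm, dig_natCast_add_two_pow_mul_of_lt x ha hj,
    digCount_natCast_add_two_pow_mul_of_le x ha hj.le]

theorem phiTerm_natCast_add_two_pow_mul_add (ha : a < 2 ^ k) (i : ℕ) :
    phiTerm ((a : ℤ_[2]) + 2 ^ k * x) (i + k) = phiTerm x i * (inv3 ^ alphaNat a * 2 ^ k) := by
  rw [phiTerm, phiTerm, add_comm i k, dig_natCast_add_two_pow_mul_add x ha,
    digCount_natCast_add_two_pow_mul_add x ha, pow_add, pow_add]
  ring

end NatCastAddTwoPowMul

/-- pseudohomomorphism: for `a < 2^k` and `m = α(a)`,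
`Φ(a + 2^k x) = Φ(a) + (Φ(x)/3^m)·2^k`. -/
theorem stmt7 (x : ℤ_[2]) (k : ℕ) (a : ℕ) (ha : a < 2 ^ k) :
    Phi ((a : ℤ_[2]) + 2 ^ k * x) =
      Phi (a : ℤ_[2]) + Phi x * inv3 ^ alphaNat a * 2 ^ k := by
  rw [Phi_eq_neg_tsum_phiTerm, ← (summable_phiTerm _).sum_add_tsum_nat_add k,
    Finset.sum_congr rfl fun j hj =>
      phiTerm_natCast_add_two_pow_mul_of_lt x ha (Finset.mem_range.mp hj),
    tsum_congr (phiTerm_natCast_add_two_pow_mul_add x ha), (summable_phiTerm x).tsum_mul_right,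
    Phi_natCast ha, Phi_eq_neg_tsum_phiTerm x]
  ring
end

section
/- Let a, k, b, v ∈ ℕ with a < 2^k, b < 2^v and v ≥ 1, and let q = a + 2^k·b̄_{v,∞} ∈ ℤ₂. Suppose the binary digits of Φ(q) are eventually periodic with preperiod u ∈ ℕ and period p ∈ ℕ, p ≥ 1, i.e., R_{u+p}(Φ(q)) = R_u(Φ(q)). Let t ∈ ℕ be such that k + tv ≥ u. Then for every positive integer H, R_{k+tv}(Φ(L_{k+tv}(q))) ≡ R_{k+(t+p·2^H)v}(Φ(L_{k+(t+p·2^H)v}(q))) (mod 2^{H+2}). -/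
noncomputable section

/-!
Bernstein's series gives `Φ(L_m x) = Φ(x) + 2^m · phiTail x m`, hence
`R_m(Φ(L_m x)) = R_m(Φ x) + phiTail x m`. Take `m = k + tv ≥ u` and `m' = m + p·2^H·v`. The first
summands agree at `m` and `m'` because the digits of `Φ q` are `p`-periodic beyond `u`. The digits
of `q` are `v`-periodic beyond `k`, so `phiTail q m' = 3^{-2^H·c} · phiTail q m` for some `c`. The
difference is therefore `(1 - 3^{-2^H·c}) · phiTail q m`, and `3^{2^H} ≡ 1 (mod 2^{H+2})`.
-/

namespace PadicInt

variable {p : ℕ} [Fact p.Prime]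

theorem appr_eq_of_dvd {z : ℤ_[p]} {N c : ℕ} (hc : c < p ^ N) (h : (p : ℤ_[p]) ^ N ∣ z - c) :
    z.appr N = c := by
  have hz : toZModPow N (z - (c : ℤ_[p])) = 0 := by
    rw [← RingHom.mem_ker, ker_toZModPow, Ideal.mem_span_singleton]
    exact h
  rw [map_sub, map_natCast, sub_eq_zero] at hz
  have hz' : ((z.appr N : ℕ) : ZMod (p ^ N)) = c := hz
  rwa [ZMod.natCast_eq_natCast_iff', Nat.mod_eq_of_lt (appr_lt z N), Nat.mod_eq_of_lt hc] at hz'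

theorem appr_eq_appr_of_dvd {x y : ℤ_[p]} {N : ℕ} (h : (p : ℤ_[p]) ^ N ∣ x - y) :
    x.appr N = y.appr N := by
  refine appr_eq_of_dvd (appr_lt y N) ?_
  have hy := Ideal.mem_span_singleton.mp (appr_spec N y)
  simpa using dvd_add h hy

theorem appr_natCast_s12 {N c : ℕ} (hc : c < p ^ N) : (c : ℤ_[p]).appr N = c :=
  appr_eq_of_dvd hc (by simp)

theorem appr_natCast_add_pow_mul_s12 {m c : ℕ} (hc : c < p ^ m) (y : ℤ_[p]) (s : ℕ) :
    ((c : ℤ_[p]) + p ^ m * y).appr (m + s) = c + p ^ m * y.appr s := by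
  refine appr_eq_of_dvd ?_ ?_
  · calc c + p ^ m * y.appr s < p ^ m * (y.appr s + 1) := by linarith
      _ ≤ p ^ m * p ^ s := Nat.mul_le_mul_left _ (appr_lt y s)
      _ = p ^ (m + s) := (pow_add p m s).symm
  · obtain ⟨w, hw⟩ := Ideal.mem_span_singleton.mp (appr_spec s y)
    exact ⟨w, by push_cast; linear_combination (p : ℤ_[p]) ^ m * hw⟩

theorem norm_two : ‖(2 : ℤ_[2])‖ = 1 / 2 := by
  simpa using norm_p (p := 2)

end PadicInt

open PadicInt Function Finset

theorem Function.Periodic.sum_range_mul {M : Type*} [AddCommMonoid M] {f : ℕ → M} {c : ℕ}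
    (h : Periodic f c) (j : ℕ) : ∑ i ∈ range (j * c), f i = j • ∑ i ∈ range c, f i := by
  induction j with
  | zero => simp
  | succ j ih =>
    rw [add_mul, one_mul, sum_range_add, ih, succ_nsmul]
    congr 1
    refine sum_congr rfl fun i _ => ?_
    rw [add_comm]
    exact h.nat_mul j i

theorem dig_eq_of_dvd {x y : ℤ_[2]} {j : ℕ} (h : (2 : ℤ_[2]) ^ (j + 1) ∣ x - y) :
    dig x j = dig y j := by
  unfold dig
  rw [appr_eq_appr_of_dvd (p := 2) (by exact_mod_cast h)]

theorem digCount_eq_of_dvd {x y : ℤ_[2]} {n : ℕ} (h : (2 : ℤ_[2]) ^ n ∣ x - y) :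
    digCount x n = digCount y n :=
  sum_congr rfl fun _ hi =>
    dig_eq_of_dvd ((pow_dvd_pow 2 (mem_range.mp hi)).trans h)

theorem digCount_add (x : ℤ_[2]) (m r : ℕ) :
    digCount x (m + r) = digCount x m + ∑ i ∈ range r, dig x (m + i) :=
  sum_range_add _ m r

theorem dig_natCast_add_two_pow_mul {m c : ℕ} (hc : c < 2 ^ m) (y : ℤ_[2]) (r : ℕ) :
    dig ((c : ℤ_[2]) + 2 ^ m * y) (m + r) = dig y r := by
  have happr := appr_natCast_add_pow_mul_s12 (p := 2) (by exact_mod_cast hc) y (r + 1)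
  rw [Nat.cast_ofNat, ← add_assoc] at happr
  unfold dig
  rw [happr, add_comm c, Nat.testBit_two_pow_mul_add _ hc, if_neg (show ¬m + r < m by omega),
    Nat.add_sub_cancel_left]

theorem dig_natCast_of_lt {c j : ℕ} (hc : c < 2 ^ j) : dig (c : ℤ_[2]) j = 0 := by
  have hc' : c < 2 ^ (j + 1) := hc.trans (Nat.pow_lt_pow_succ one_lt_two)
  simp [dig, appr_natCast_s12 (p := 2) hc', Nat.testBit_lt_two_pow hc]

theorem periodic_dig_of_eq_natCast_add_two_pow_mul {x : ℤ_[2]} {b v : ℕ} (hb : b < 2 ^ v)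
    (hx : x = b + 2 ^ v * x) : Periodic (dig x) v := fun r =>
  calc dig x (r + v) = dig ((b : ℤ_[2]) + 2 ^ v * x) (v + r) := by rw [← hx, add_comm]
    _ = dig x r := dig_natCast_add_two_pow_mul hb x r

theorem summable_mul_two_pow_mul (d w : ℕ → ℤ_[2]) : Summable fun r => d r * 2 ^ r * w r := by
  refine Summable.of_norm_bounded summable_geometric_two fun r => ?_
  rw [norm_mul, norm_mul, norm_pow, PadicInt.norm_two]
  calc ‖d r‖ * (1 / 2) ^ r * ‖w r‖ ≤ 1 * (1 / 2) ^ r * 1 := by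
        gcongr
        · exact norm_le_one _
        · exact norm_le_one _
    _ = (1 / 2) ^ r := by ring

def phiTail (x : ℤ_[2]) (n : ℕ) : ℤ_[2] :=
  ∑' r : ℕ, (dig x (n + r) : ℤ_[2]) * 2 ^ r * inv3 ^ digCount x (n + r)

theorem Phi_eq_neg_sum_sub_two_pow_mul_phiTail (x : ℤ_[2]) (n : ℕ) :
    Phi x = -(∑ j ∈ range n, (dig x j : ℤ_[2]) * 2 ^ j * inv3 ^ digCount x j) -
      2 ^ n * phiTail x n := by
  have htail : ∑' i, (dig x (i + n) : ℤ_[2]) * 2 ^ (i + n) * inv3 ^ digCount x (i + n) =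
      2 ^ n * phiTail x n := by
    rw [phiTail, ← (summable_mul_two_pow_mul _ _).tsum_mul_left]
    refine tsum_congr fun i => ?_
    rw [add_comm i n, pow_add]
    ring
  rw [Phi, ← (summable_mul_two_pow_mul _ _).sum_add_tsum_nat_add n, htail]
  ring

theorem phiTail_natCast_of_lt {c n : ℕ} (hc : c < 2 ^ n) : phiTail (c : ℤ_[2]) n = 0 := by
  have hdig (r : ℕ) : dig (c : ℤ_[2]) (n + r) = 0 :=
    dig_natCast_of_lt (hc.trans_le (Nat.pow_le_pow_right two_pos (Nat.le_add_right n r)))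
  simp [phiTail, hdig]

theorem Phi_natCast_appr (x : ℤ_[2]) (n : ℕ) :
    Phi (x.appr n : ℤ_[2]) = Phi x + 2 ^ n * phiTail x n := by
  have hdvd : (2 : ℤ_[2]) ^ n ∣ (x.appr n : ℤ_[2]) - x :=
    dvd_sub_comm.mp (two_pow_dvd_sub_appr n x)
  rw [Phi_eq_neg_sum_sub_two_pow_mul_phiTail _ n, Phi_eq_neg_sum_sub_two_pow_mul_phiTail x n,
    phiTail_natCast_of_lt (appr_lt x n)]
  have hlow : ∀ j ∈ range n, (dig (x.appr n : ℤ_[2]) j : ℤ_[2]) * 2 ^ j *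
      inv3 ^ digCount (x.appr n : ℤ_[2]) j = (dig x j : ℤ_[2]) * 2 ^ j * inv3 ^ digCount x j := by
    intro j hj
    have hj := mem_range.mp hj
    rw [dig_eq_of_dvd ((pow_dvd_pow 2 hj).trans hdvd),
      digCount_eq_of_dvd ((pow_dvd_pow 2 hj.le).trans hdvd)]
  rw [sum_congr rfl hlow]
  ring

theorem phiTail_add_of_periodic {x : ℤ_[2]} {n s : ℕ} (h : Periodic (fun i => dig x (n + i)) s) :
    phiTail x (n + s) = inv3 ^ (∑ i ∈ range s, dig x (n + i)) * phiTail x n := by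
  have hdig (r : ℕ) : dig x (n + s + r) = dig x (n + r) := by
    rw [add_assoc, add_comm s]
    exact h r
  have hcount (r : ℕ) :
      digCount x (n + s + r) = ∑ i ∈ range s, dig x (n + i) + digCount x (n + r) := by
    rw [digCount_add, digCount_add, digCount_add x n r]
    simp only [hdig]
    ring
  rw [phiTail, phiTail, ← (summable_mul_two_pow_mul _ _).tsum_mul_left]
  refine tsum_congr fun r => ?_
  rw [hdig, hcount, pow_add]
  ring

theorem Rk_spec (n : ℕ) (x : ℤ_[2]) : x = (x.appr n : ℤ_[2]) + 2 ^ n * Rk n x :=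
  (exists_Rk n x).choose_spec

theorem Rk_eq_of_eq_natCast_add_two_pow_mul {n c : ℕ} {x z : ℤ_[2]} (hc : c < 2 ^ n)
    (h : x = c + 2 ^ n * z) : Rk n x = z := by
  have happr : x.appr n = c := appr_eq_of_dvd (p := 2) hc ⟨z, by rw [h]; push_cast; ring⟩
  have hx := (Rk_spec n x).symm.trans h
  rw [happr] at hx
  exact mul_left_cancel₀ (pow_ne_zero n two_ne_zero) (add_left_cancel hx)

theorem Rk_add_two_pow_mul (n : ℕ) (y w : ℤ_[2]) : Rk n (y + 2 ^ n * w) = Rk n y + w :=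
  Rk_eq_of_eq_natCast_add_two_pow_mul (appr_lt y n) (by nth_rewrite 1 [Rk_spec n y]; ring)

theorem Rk_add (m j : ℕ) (y : ℤ_[2]) : Rk (m + j) y = Rk j (Rk m y) := by
  have happr : y.appr (m + j) = y.appr m + 2 ^ m * (Rk m y).appr j := by
    have h := appr_natCast_add_pow_mul_s12 (p := 2) (appr_lt y m) (Rk m y) j
    rwa [Nat.cast_ofNat, ← Rk_spec] at h
  refine Rk_eq_of_eq_natCast_add_two_pow_mul (appr_lt y (m + j)) ?_
  rw [happr, pow_add]
  push_cast
  linear_combination Rk_spec m y + 2 ^ m * Rk_spec j (Rk m y)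

theorem Rk_add_mul_of_Rk_add_eq {u p n : ℕ} {z : ℤ_[2]} (hper : Rk (u + p) z = Rk u z)
    (hn : u ≤ n) (j : ℕ) : Rk (n + j * p) z = Rk n z := by
  have hfix (j : ℕ) : Rk (u + j * p) z = Rk u z := by
    induction j with
    | zero => simp
    | succ j ih => rw [add_mul, one_mul, ← add_assoc, Rk_add, ih, ← Rk_add, hper]
  obtain ⟨s, rfl⟩ := Nat.exists_eq_add_of_le hn
  rw [add_right_comm, Rk_add, hfix, ← Rk_add]

theorem Rk_Phi_Lk (m : ℕ) (x : ℤ_[2]) : Rk m (Phi (Lk m x)) = Rk m (Phi x) + phiTail x m := by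
  rw [Lk, Phi_natCast_appr, Rk_add_two_pow_mul]

theorem two_pow_dvd_three_pow_two_pow_sub_one {R : Type*} [CommRing R] {H : ℕ} (hH : 1 ≤ H) :
    (2 : R) ^ (H + 2) ∣ 3 ^ 2 ^ H - 1 := by
  induction H, hH using Nat.le_induction with
  | base => exact ⟨1, by norm_num⟩
  | succ H _ ih =>
    obtain ⟨d, hd⟩ := ih
    refine ⟨d * (2 ^ (H + 1) * d + 1), ?_⟩
    rw [pow_succ 2 H, pow_mul, sub_eq_iff_eq_add.mp hd]
    ring

theorem inv3_mul_three : inv3 * 3 = 1 :=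
  Ring.inverse_mul_cancel _ <| isUnit_iff.mpr <| by
    simpa using (norm_natCast_eq_one_iff (p := 2) (n := 3)).mpr (by norm_num)

theorem two_pow_dvd_one_sub_inv3_pow {H : ℕ} (hH : 1 ≤ H) (m : ℕ) :
    (2 : ℤ_[2]) ^ (H + 2) ∣ 1 - inv3 ^ (2 ^ H * m) := by
  have h3 : (2 : ℤ_[2]) ^ (H + 2) ∣ 3 ^ (2 ^ H * m) - 1 :=
    (two_pow_dvd_three_pow_two_pow_sub_one hH).trans (pow_one_sub_dvd_pow_mul_sub_one 3 _ m)
  have hinv : 1 - inv3 ^ (2 ^ H * m) = inv3 ^ (2 ^ H * m) * (3 ^ (2 ^ H * m) - 1) := by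
    rw [mul_sub, ← mul_pow, inv3_mul_three, one_pow, mul_one]
  rw [hinv]
  exact h3.mul_left _

theorem bbar_eq_natCast_add_two_pow_mul_bbar (b : ℕ) {v : ℕ} (hv : 1 ≤ v) :
    bbar b v = b + 2 ^ v * bbar b v := by
  have hnorm : ‖(2 : ℤ_[2]) ^ v‖ < 1 := by
    rw [norm_pow, PadicInt.norm_two]
    exact pow_lt_one₀ (by norm_num) (by norm_num) (by omega)
  have hgeom := mul_neg_geom_series _ hnorm
  unfold bbar
  simp_rw [pow_mul]
  linear_combination (b : ℤ_[2]) * hgeom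

theorem stmt12_general (a k b v : ℕ) (ha : a < 2 ^ k) (hb : b < 2 ^ v) (hv : 1 ≤ v)
    (q : ℤ_[2]) (hq : q = (a : ℤ_[2]) + 2 ^ k * bbar b v)
    (u p : ℕ) (hper : Rk (u + p) (Phi q) = Rk u (Phi q))
    (t : ℕ) (ht : u ≤ k + t * v) (H : ℕ) (hH : 1 ≤ H) :
    (2 : ℤ_[2]) ^ (H + 2) ∣
      Rk (k + t * v) (Phi (Lk (k + t * v) q)) -
      Rk (k + (t + p * 2 ^ H) * v) (Phi (Lk (k + (t + p * 2 ^ H) * v) q)) := by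
  set n := k + t * v with hn
  have hperiodic : Periodic (fun i => dig q (n + i)) v := by
    have hdig : (fun i => dig q (n + i)) = fun i => dig (bbar b v) (t * v + i) :=
      funext fun i => by rw [hn, add_assoc, hq, dig_natCast_add_two_pow_mul ha]
    rw [hdig]
    exact (periodic_dig_of_eq_natCast_add_two_pow_mul hb
      (bbar_eq_natCast_add_two_pow_mul_bbar b hv)).const_add _
  have hR : Rk (n + p * 2 ^ H * v) (Phi q) = Rk n (Phi q) := by
    rw [show p * 2 ^ H * v = 2 ^ H * v * p by ring]
    exact Rk_add_mul_of_Rk_add_eq hper ht _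
  have hW := phiTail_add_of_periodic (hperiodic.nat_mul (p * 2 ^ H))
  set c := ∑ i ∈ range v, dig q (n + i)
  rw [Nat.cast_id, hperiodic.sum_range_mul, smul_eq_mul,
    show p * 2 ^ H * c = 2 ^ H * (p * c) by ring] at hW
  rw [show k + (t + p * 2 ^ H) * v = n + p * 2 ^ H * v by ring, Rk_Phi_Lk, Rk_Phi_Lk, hR, hW,
    add_sub_add_left_eq_sub, ← one_sub_mul]
  exact (two_pow_dvd_one_sub_inv3_pow hH _).mul_right _

/-- periodicity of `Φ` on rational 2-adics: with `q = a + 2^k·b̄_{v,∞}`,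
if the digits of `Φ(q)` are eventually periodic with preperiod `u` and period `p ≥ 1`,
and `k + tv ≥ u`, then for every `H ≥ 1`,
`R_{k+tv}(Φ(L_{k+tv}(q))) ≡ R_{k+(t+p·2^H)v}(Φ(L_{k+(t+p·2^H)v}(q))) (mod 2^{H+2})`. -/
theorem stmt12 (a k b v : ℕ) (ha : a < 2 ^ k) (hb : b < 2 ^ v) (hv : 1 ≤ v)
    (q : ℤ_[2]) (hq : q = (a : ℤ_[2]) + 2 ^ k * bbar b v)
    (u p : ℕ) (hp : 1 ≤ p) (hper : Rk (u + p) (Phi q) = Rk u (Phi q))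
    (t : ℕ) (ht : u ≤ k + t * v) (H : ℕ) (hH : 1 ≤ H) :
    (2 : ℤ_[2]) ^ (H + 2) ∣
      Rk (k + t * v) (Phi (Lk (k + t * v) q)) -
      Rk (k + (t + p * 2 ^ H) * v) (Phi (Lk (k + (t + p * 2 ^ H) * v) q)) :=
  stmt12_general a k b v ha hb hv q hq u p hper t ht H hH
end
end

section
/- Let k ∈ ℕ and x ∈ ℕ with x < 2^k. Then fP(x, k) = 0 if and only if Φ(x) ≢ x (mod 2^k) (where the natural number x is viewed as an element of ℤ₂). -/
/-! The `j`-th term of Bernstein's series is divisible by `2^j` and, for `j < k`, depends only on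
the residue mod `2^k`. Hence `Φ` preserves congruences mod `2^k`, and so does `z ↦ Φ z - z`:
whether some `z ≡ x (mod 2^k)` satisfies `Φ z ≡ z (mod 2^k)` is decided by `z = x` alone. -/

namespace PadicInt

variable {p : ℕ} [Fact p.Prime]

theorem appr_eq_of_pow_dvd_sub {n : ℕ} {x y : ℤ_[p]} (h : (p : ℤ_[p]) ^ n ∣ x - y) :
    x.appr n = y.appr n := by
  have hxy : toZModPow n x = toZModPow n y := by
    rw [← sub_eq_zero, ← map_sub, ← RingHom.mem_ker, ker_toZModPow, Ideal.mem_span_singleton]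
    exact h
  have hmod : x.appr n % p ^ n = y.appr n % p ^ n := (ZMod.natCast_eq_natCast_iff' _ _ _).1 hxy
  rwa [Nat.mod_eq_of_lt (appr_lt x n), Nat.mod_eq_of_lt (appr_lt y n)] at hmod

theorem isClosed_span_pow (n : ℕ) : IsClosed (Ideal.span {(p : ℤ_[p]) ^ n} : Set ℤ_[p]) := by
  have hball : (Ideal.span {(p : ℤ_[p]) ^ n} : Set ℤ_[p]) = {x | ‖x‖ ≤ (p : ℝ) ^ (-n : ℤ)} := by
    ext x
    exact (norm_le_pow_iff_mem_span_pow x n).symm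
  rw [hball]
  exact isClosed_le continuous_norm continuous_const

theorem pow_dvd_tsum {ι : Type*} {n : ℕ} {f : ι → ℤ_[p]} (h : ∀ i, (p : ℤ_[p]) ^ n ∣ f i) :
    (p : ℤ_[p]) ^ n ∣ ∑' i, f i := by
  simp_rw [← Ideal.mem_span_singleton] at h ⊢
  exact tsum_mem (isClosed_span_pow n) h

theorem summable_of_pow_dvd {f : ℕ → ℤ_[p]} (h : ∀ i, (p : ℤ_[p]) ^ i ∣ f i) : Summable f := by
  refine Summable.of_norm_bounded (g := fun i => ((p : ℝ)⁻¹) ^ i)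
    (summable_geometric_of_lt_one (by positivity) (inv_lt_one_of_one_lt₀ ?_)) fun i => ?_
  · exact_mod_cast (Fact.out : p.Prime).one_lt
  · rw [inv_pow, ← zpow_natCast, ← zpow_neg]
    exact (norm_le_pow_iff_mem_span_pow _ _).2 (Ideal.mem_span_singleton.2 (h i))

end PadicInt

theorem dig_eq_of_pow_dvd_sub {k j : ℕ} (hj : j < k) {z x : ℤ_[2]}
    (h : (2 : ℤ_[2]) ^ k ∣ z - x) : dig z j = dig x j := by
  have hj1 : (2 : ℤ_[2]) ^ (j + 1) ∣ z - x := (pow_dvd_pow 2 hj).trans h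
  rw [dig, dig, PadicInt.appr_eq_of_pow_dvd_sub (p := 2) (by exact_mod_cast hj1)]

theorem digCount_eq_of_pow_dvd_sub {k j : ℕ} (hj : j ≤ k) {z x : ℤ_[2]}
    (h : (2 : ℤ_[2]) ^ k ∣ z - x) : digCount z j = digCount x j :=
  Finset.sum_congr rfl fun _ hi => dig_eq_of_pow_dvd_sub ((Finset.mem_range.1 hi).trans_le hj) h

noncomputable def bernsteinTerm (x : ℤ_[2]) (j : ℕ) : ℤ_[2] :=
  (dig x j : ℤ_[2]) * 2 ^ j * inv3 ^ digCount x j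

theorem Phi_eq_neg_tsum (x : ℤ_[2]) : Phi x = -∑' j, bernsteinTerm x j := rfl

theorem two_pow_dvd_bernsteinTerm (x : ℤ_[2]) (j : ℕ) : (2 : ℤ_[2]) ^ j ∣ bernsteinTerm x j :=
  (dvd_mul_left _ _).mul_right _

theorem summable_bernsteinTerm (x : ℤ_[2]) : Summable (bernsteinTerm x) :=
  PadicInt.summable_of_pow_dvd (p := 2) fun j => by exact_mod_cast two_pow_dvd_bernsteinTerm x j

theorem two_pow_dvd_bernsteinTerm_sub {k : ℕ} {z x : ℤ_[2]} (h : (2 : ℤ_[2]) ^ k ∣ z - x)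
    (j : ℕ) : (2 : ℤ_[2]) ^ k ∣ bernsteinTerm z j - bernsteinTerm x j := by
  rcases lt_or_ge j k with hj | hj
  · rw [bernsteinTerm, bernsteinTerm, dig_eq_of_pow_dvd_sub hj h,
      digCount_eq_of_pow_dvd_sub hj.le h, sub_self]
    exact dvd_zero _
  · have hk : ∀ y : ℤ_[2], (2 : ℤ_[2]) ^ k ∣ bernsteinTerm y j :=
      fun y => (pow_dvd_pow 2 hj).trans (two_pow_dvd_bernsteinTerm y j)
    exact dvd_sub (hk z) (hk x)

theorem two_pow_dvd_Phi_sub_Phi {k : ℕ} {z x : ℤ_[2]} (h : (2 : ℤ_[2]) ^ k ∣ z - x) :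
    (2 : ℤ_[2]) ^ k ∣ Phi z - Phi x := by
  rw [Phi_eq_neg_tsum, Phi_eq_neg_tsum, neg_sub_neg,
    ← (summable_bernsteinTerm x).tsum_sub (summable_bernsteinTerm z)]
  exact_mod_cast PadicInt.pow_dvd_tsum (p := 2) fun j => by
    exact_mod_cast two_pow_dvd_bernsteinTerm_sub (dvd_sub_comm.1 h) j

theorem two_pow_dvd_Phi_sub_self_iff {k : ℕ} {z x : ℤ_[2]} (h : (2 : ℤ_[2]) ^ k ∣ z - x) :
    (2 : ℤ_[2]) ^ k ∣ Phi z - z ↔ (2 : ℤ_[2]) ^ k ∣ Phi x - x := by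
  have hsplit : Phi z - z = (Phi x - x) + ((Phi z - Phi x) - (z - x)) := by ring
  rw [hsplit, dvd_add_left (dvd_sub (two_pow_dvd_Phi_sub_Phi h) h)]

theorem stmt16_general (k x : ℕ) :
    fP x k = 0 ↔ ¬ (2 : ℤ_[2]) ^ k ∣ Phi (x : ℤ_[2]) - (x : ℤ_[2]) := by
  simp only [fP, ENat.sInf_eq_zero, Set.mem_image, Nat.cast_eq_zero, exists_eq_right,
    Set.mem_ofPred_eq, add_zero]
  exact ⟨fun hfar => hfar x (by simp), fun hx z hz => (two_pow_dvd_Phi_sub_self_iff hz).not.2 hx⟩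

/-- `fP(x,k) = 0` iff `Φ(x) ≢ x (mod 2^k)`. -/
theorem stmt16 (k x : ℕ) (hx : x < 2 ^ k) :
    fP x k = 0 ↔ ¬ (2 : ℤ_[2]) ^ k ∣ Phi (x : ℤ_[2]) - (x : ℤ_[2]) :=
  stmt16_general k x
end

section
/- Define b : ℕ → ℕ by letting b_n be the smallest positive prime dividing n + 2. Then the sequence b is pseudoperiodic: for every n ∈ ℕ there exists m ∈ ℕ with m ≥ 1 such that b_{n+mr} = b_n for every r ∈ ℕ with r ≥ 1. -/
/-- the sequence `n ↦` (smallest positive prime dividing `n + 2`) is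
pseudoperiodic. -/
theorem stmt18 (n : ℕ) :
    ∃ m : ℕ, 1 ≤ m ∧ ∀ r : ℕ, 1 ≤ r → Nat.minFac (n + m * r + 2) = Nat.minFac (n + 2) := by
  refine ⟨Nat.factorial (n + 2), Nat.one_le_iff_ne_zero.mpr (Nat.factorial_ne_zero _), fun r hr => ?_⟩
  set p := Nat.minFac (n + 2) with hp
  have hple : p ≤ n + 2 := Nat.minFac_le (by omega)
  have hpdvd : p ∣ n + 2 := Nat.minFac_dvd _
  have hpfac : p ∣ Nat.factorial (n + 2) := Nat.dvd_factorial (Nat.minFac_pos _) hple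
  have hN : n + Nat.factorial (n + 2) * r + 2 = (n + 2) + Nat.factorial (n + 2) * r := by ring
  have hpN : p ∣ n + Nat.factorial (n + 2) * r + 2 := by
    rw [hN]; exact Nat.dvd_add hpdvd (hpfac.mul_right r)
  have hNne : n + Nat.factorial (n + 2) * r + 2 ≠ 1 := by omega
  apply le_antisymm
  · exact Nat.minFac_le_of_dvd ((Nat.minFac_prime (by omega : n + 2 ≠ 1)).two_le) hpN
  · by_contra h
    push_neg at h
    set q := Nat.minFac (n + Nat.factorial (n + 2) * r + 2) with hq
    have hqprime : q.Prime := Nat.minFac_prime hNne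
    have hqdvd : q ∣ n + Nat.factorial (n + 2) * r + 2 := Nat.minFac_dvd _
    have hqfac : q ∣ Nat.factorial (n + 2) := Nat.dvd_factorial hqprime.pos (by omega)
    have : q ∣ n + 2 := by
      have := (Nat.dvd_add_right (hqfac.mul_right r)).mp (by rwa [hN, Nat.add_comm] at hqdvd)
      exact this
    have : p ≤ q := Nat.minFac_le_of_dvd hqprime.two_le this
    omega
end
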